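/- arXiv:1408.5458 — 4 statements merged into one kernel-verified Lean document; each statement's English description precedes it below -/
import Mathlib

section
/- Let X ⊆ ℝ^s be an open convex set, let C ⊆ ℝ^n be a closed convex cone with vertex at the origin and nonempty interior, and let f : X → ℝ^n be Fréchet differentiable on X and quasiconvex on X with respect to C. Then f is pseudoconvex on X with respect to C if and only if every vector critical point x ∈ X of f with respect to C is a weak global minimizer of f on X with respect to C. -/
/-! If `x` is critical with multiplier `λ ∈ C*` and `f` is pseudoconvex, a point `y` with
`f y ∈ f x - int C` would give `-Jf x (y - x) ∈ int C`, where `λ` is positive, although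
`λ ∘ Jf x` vanishes. Conversely, if `z = -Jf x (y - x)` lies in `C` (quasiconvexity) but not
in `int C`, a supporting functional `λ ∈ C*` of the cone at `z` vanishes at `z`. Quasiconvexity
at the points `y'` near `y`, which still satisfy `f y' ∈ f x - int C`, makes `y - x` a local
maximum of the linear functional `λ ∘ Jf x`, so `λ ∘ Jf x = 0`: `x` is critical but not a weak
minimizer. -/

open Matrix Set

/-- The positive polar cone of a set `A ⊆ ℝ^d`. -/
def polarCone {d : ℕ} (A : Set (Fin d → ℝ)) : Set (Fin d → ℝ) :=
  {l | ∀ x ∈ A, 0 ≤ l ⬝ᵥ x}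

open Filter Topology

theorem ContinuousLinearMap.pos_of_nonneg_of_mem_interior {E : Type*} [NormedAddCommGroup E]
    [NormedSpace ℝ E] {A : Set E} {w : E} (φ : StrongDual ℝ E) (hφ : φ ≠ 0)
    (hA : ∀ a ∈ A, 0 ≤ φ a) (hw : w ∈ interior A) : 0 < φ w := by
  refine (hA w (interior_subset hw)).lt_of_ne fun hφw => hφ ?_
  have hmin : IsLocalMin φ w := by
    filter_upwards [mem_interior_iff_mem_nhds.mp hw] with a ha
    rw [← hφw]
    exact hA a ha
  exact hmin.hasFDerivAt_eq_zero φ.hasFDerivAt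

theorem Convex.exists_dual_nonneg_eq_zero_of_notMem_interior {E : Type*} [TopologicalSpace E]
    [AddCommGroup E] [IsTopologicalAddGroup E] [Module ℝ E] [ContinuousSMul ℝ E] {C : Set E}
    (hCconvex : Convex ℝ C) (hCcone : ∀ t : ℝ, 0 < t → ∀ y ∈ C, t • y ∈ C)
    (hCint : (interior C).Nonempty) {z : E} (hz : z ∈ C) (hzint : z ∉ interior C) :
    ∃ φ : StrongDual ℝ E, φ ≠ 0 ∧ (∀ c ∈ C, 0 ≤ φ c) ∧ φ z = 0 := by
  obtain ⟨φ, hφ0, hφ⟩ :=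
    geometric_hahn_banach_of_nonempty_interior_point hCconvex hzint hCint
  -- the cone property forces the supporting hyperplane at `z` through the origin
  have h2 := hφ _ (hCcone 2 two_pos z hz)
  have h12 := hφ _ (hCcone 2⁻¹ (by norm_num) z hz)
  simp only [map_smul, smul_eq_mul] at h2 h12
  have hφz : φ z = 0 := by linarith
  refine ⟨-φ, neg_ne_zero.mpr hφ0, fun c hc => ?_, by simp [hφz]⟩
  simpa [hφz] using hφ c hc

theorem ContinuousLinearMap.comp_eq_zero_of_quasiconvexAt {E F : Type*} [NormedAddCommGroup E]
    [NormedSpace ℝ E] [NormedAddCommGroup F] [NormedSpace ℝ F] {X : Set E} {C : Set F}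
    {f : E → F} {L : E →L[ℝ] F} {x y : E} (hX : IsOpen X) (hy : y ∈ X)
    (hfy : ContinuousAt f y) (hxy : f x - f y ∈ interior C)
    (hquasi : ∀ y' ∈ X, f x - f y' ∈ interior C → -L (y' - x) ∈ C)
    {φ : StrongDual ℝ F} (hφC : ∀ c ∈ C, 0 ≤ φ c) (hφ : φ (L (y - x)) = 0) :
    φ.comp L = 0 := by
  have hnear : ∀ᶠ y' in 𝓝 y, y' ∈ X ∧ f x - f y' ∈ interior C :=
    Eventually.and (hX.mem_nhds hy)
      ((continuousAt_const.sub hfy).eventually (isOpen_interior.mem_nhds hxy))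
  have hshift : Tendsto (· + x) (𝓝 (y - x)) (𝓝 y) := by
    simpa using (continuous_add_const x).tendsto (y - x)
  have hmax : IsLocalMax (φ.comp L) (y - x) := by
    filter_upwards [hshift.eventually hnear] with u ⟨hu, hfu⟩
    show φ (L u) ≤ φ (L (y - x))
    rw [hφ]
    simpa using hφC _ (hquasi _ hu hfu)
  exact hmax.hasFDerivAt_eq_zero (φ.comp L).hasFDerivAt

noncomputable def dotProductStrongDualEquiv (ι : Type*) [Fintype ι] [DecidableEq ι] :
    (ι → ℝ) ≃ₗ[ℝ] StrongDual ℝ (ι → ℝ) :=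
  (dotProductEquiv ℝ ι).trans LinearMap.toContinuousLinearMap

@[simp]
theorem dotProductStrongDualEquiv_apply {ι : Type*} [Fintype ι] [DecidableEq ι]
    (l v : ι → ℝ) :
    dotProductStrongDualEquiv ι l v = l ⬝ᵥ v :=
  rfl

theorem dotProduct_pos_of_mem_polarCone {d : ℕ} {A : Set (Fin d → ℝ)} {l w : Fin d → ℝ}
    (hl : l ∈ polarCone A) (hl0 : l ≠ 0) (hw : w ∈ interior A) : 0 < l ⬝ᵥ w :=
  (dotProductStrongDualEquiv (Fin d) l).pos_of_nonneg_of_mem_interior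
    ((LinearEquiv.map_ne_zero_iff _).mpr hl0) hl hw

theorem exists_mem_polarCone_dotProduct_eq_zero {d : ℕ} {C : Set (Fin d → ℝ)}
    (hCconvex : Convex ℝ C) (hCcone : ∀ t : ℝ, 0 < t → ∀ y ∈ C, t • y ∈ C)
    (hCint : (interior C).Nonempty) {z : Fin d → ℝ} (hz : z ∈ C) (hzint : z ∉ interior C) :
    ∃ l ∈ polarCone C, l ≠ 0 ∧ l ⬝ᵥ z = 0 := by
  obtain ⟨φ, hφ0, hφC, hφz⟩ :=
    hCconvex.exists_dual_nonneg_eq_zero_of_notMem_interior hCcone hCint hz hzint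
  set e := dotProductStrongDualEquiv (Fin d)
  have hφ : ∀ v, e.symm φ ⬝ᵥ v = φ v := fun v => by
    rw [← dotProductStrongDualEquiv_apply, LinearEquiv.apply_symm_apply]
  refine ⟨e.symm φ, fun c hc => ?_, (LinearEquiv.map_ne_zero_iff _).mpr hφ0, ?_⟩
  · rw [hφ]
    exact hφC c hc
  · rw [hφ, hφz]

theorem stmt_8_general {s n : ℕ} (X : Set (Fin s → ℝ)) (hXopen : IsOpen X)
    (C : Set (Fin n → ℝ))
    (hCcone : ∀ t : ℝ, 0 < t → ∀ y ∈ C, t • y ∈ C)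
    (hCconvex : Convex ℝ C)
    (hCint : (interior C).Nonempty)
    (f : (Fin s → ℝ) → (Fin n → ℝ))
    (Jf : (Fin s → ℝ) → ((Fin s → ℝ) →L[ℝ] (Fin n → ℝ)))
    (hdiff : ∀ x ∈ X, HasFDerivAt f (Jf x) x)
    (hquasi : ∀ x ∈ X, ∀ y ∈ X, f x - f y ∈ interior C → -(Jf x (y - x)) ∈ C) :
    (∀ x ∈ X, ∀ y ∈ X, f x - f y ∈ interior C → -(Jf x (y - x)) ∈ interior C) ↔
      (∀ x ∈ X,
        (∃ l ∈ polarCone C, l ≠ 0 ∧ ∀ v : Fin s → ℝ, l ⬝ᵥ Jf x v = 0) →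
        ∀ y ∈ X, f x - f y ∉ interior C) := by
  constructor
  · rintro hpseudo x hx ⟨l, hlC, hl0, hlJ⟩ y hy hfy
    have hpos := dotProduct_pos_of_mem_polarCone hlC hl0 (hpseudo x hx y hy hfy)
    simp [hlJ] at hpos
  · intro hcrit x hx y hy hfy
    by_contra hzint
    obtain ⟨l, hlC, hl0, hlz⟩ :=
      exists_mem_polarCone_dotProduct_eq_zero hCconvex hCcone hCint (hquasi x hx y hy hfy) hzint
    have hJ : (dotProductStrongDualEquiv (Fin n) l).comp (Jf x) = 0 :=
      ContinuousLinearMap.comp_eq_zero_of_quasiconvexAt hXopen hy (hdiff y hy).continuousAt hfy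
        (hquasi x hx) hlC
        (by simpa only [dotProductStrongDualEquiv_apply, dotProduct_neg, neg_eq_zero] using hlz)
    refine hcrit x hx ⟨l, hlC, hl0, fun v => ?_⟩ y hy hfy
    simpa using DFunLike.congr_fun hJ v

/-- Let `X ⊆ ℝ^s` be an open convex set, `C ⊆ ℝ^n` a closed convex cone with vertex at
the origin and nonempty interior, and `f : X → ℝ^n` Fréchet differentiable on `X`
(with Jacobian `Jf`) and quasiconvex on `X` w.r.t. `C`.  Then `f` is pseudoconvex on
`X` w.r.t. `C` iff every vector critical point of `f` w.r.t. `C` is a weak global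
minimizer of `f` on `X` w.r.t. `C`.

Quasiconvex: `f y ∈ f x − int C ⟹ Jf x (y − x) ∈ −C`;
pseudoconvex: `f y ∈ f x − int C ⟹ Jf x (y − x) ∈ −int C`;
vector critical point: `∃ λ ∈ C*, λ ≠ 0, λ ⬝ᵥ Jf x v = 0` for all `v`;
weak global minimizer: no `y ∈ X` with `f y ∈ f x − int C`. -/
theorem stmt_8 {s n : ℕ} (X : Set (Fin s → ℝ)) (hXopen : IsOpen X) (hXconvex : Convex ℝ X)
    (C : Set (Fin n → ℝ))
    (hC0 : (0 : Fin n → ℝ) ∈ C)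
    (hCcone : ∀ t : ℝ, 0 < t → ∀ y ∈ C, t • y ∈ C)
    (hCclosed : IsClosed C) (hCconvex : Convex ℝ C)
    (hCint : (interior C).Nonempty)
    (f : (Fin s → ℝ) → (Fin n → ℝ))
    (Jf : (Fin s → ℝ) → ((Fin s → ℝ) →L[ℝ] (Fin n → ℝ)))
    (hdiff : ∀ x ∈ X, HasFDerivAt f (Jf x) x)
    (hquasi : ∀ x ∈ X, ∀ y ∈ X, f x - f y ∈ interior C → -(Jf x (y - x)) ∈ C) :
    (∀ x ∈ X, ∀ y ∈ X, f x - f y ∈ interior C → -(Jf x (y - x)) ∈ interior C) ↔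
      (∀ x ∈ X,
        (∃ l ∈ polarCone C, l ≠ 0 ∧ ∀ v : Fin s → ℝ, l ⬝ᵥ Jf x v = 0) →
        ∀ y ∈ X, f x - f y ∉ interior C) :=
  stmt_8_general X hXopen C hCcone hCconvex hCint f Jf hdiff hquasi
end

section
/- Let X ⊆ ℝ^s be an open convex set, let K ⊆ ℝ^m be a closed convex cone with vertex at the origin, and let g : X → ℝ^m be Fréchet differentiable and scalarly quasiconvex on X with respect to K. Then for all x, y ∈ X with g(x) ∈ −K and g(y) ∈ −K one has Jg(x)(y − x) ∈ −M**(x), where M*(x) := {μ ∈ K* | μ · g(x) = 0} and M**(x) is the positive polar cone of M*(x). -/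
open Matrix Set

/-- For a feasible point `x` (i.e. `g x ∈ −K`),
`M*(x) := {μ ∈ K* | μ ⬝ᵥ g x = 0}`. -/
def Mstar {s m : ℕ} (K : Set (Fin m → ℝ)) (g : (Fin s → ℝ) → (Fin m → ℝ))
    (x : Fin s → ℝ) : Set (Fin m → ℝ) :=
  {μ | μ ∈ polarCone K ∧ μ ⬝ᵥ g x = 0}

/-! For `μ ∈ M*(x)` we have `μ ⬝ᵥ g x = 0 ≥ μ ⬝ᵥ g y`, so quasiconvexity of `μ ⬝ᵥ g` puts its
maximum over the segment `[x, y]` at `x`; Fermat's rule in the feasible direction `y - x` then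
gives `μ ⬝ᵥ Jg x (y - x) ≤ 0`. -/

section SegmentMax

variable {E : Type*} [NormedAddCommGroup E] [NormedSpace ℝ E]

theorem isMaxOn_segment_of_le_max {f : E → ℝ} {x y : E}
    (hq : ∀ t ∈ Icc (0 : ℝ) 1, f (x + t • (y - x)) ≤ max (f x) (f y)) (hyx : f y ≤ f x) :
    IsMaxOn f (segment ℝ x y) x := by
  rw [IsMaxOn, IsMaxFilter, Filter.eventually_principal, segment_eq_image']
  rintro _ ⟨t, ht, rfl⟩
  exact (hq t ht).trans (max_le le_rfl hyx)

theorem HasFDerivAt.apply_sub_nonpos_of_isMaxOn_segment {f : E → ℝ} {f' : E →L[ℝ] ℝ} {x y : E}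
    (hf : HasFDerivAt f f' x) (hmax : IsMaxOn f (segment ℝ x y) x) : f' (y - x) ≤ 0 :=
  hmax.localize.hasFDerivWithinAt_nonpos hf.hasFDerivWithinAt
    (sub_mem_posTangentConeAt_of_segment_subset subset_rfl)

theorem HasFDerivAt.dotProduct_left {m : ℕ} {g : E → Fin m → ℝ} {g' : E →L[ℝ] Fin m → ℝ} {x : E}
    (hg : HasFDerivAt g g' x) (μ : Fin m → ℝ) :
    HasFDerivAt (fun z => μ ⬝ᵥ g z)
      ((LinearMap.toContinuousLinearMap (dotProductBilin ℝ ℝ μ)).comp g') x :=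
  (LinearMap.toContinuousLinearMap (dotProductBilin ℝ ℝ μ)).hasFDerivAt.comp x hg

end SegmentMax

theorem stmt_9_general {s m : ℕ} (X : Set (Fin s → ℝ))
    (K : Set (Fin m → ℝ))
    (g : (Fin s → ℝ) → (Fin m → ℝ))
    (Jg : (Fin s → ℝ) → ((Fin s → ℝ) →L[ℝ] (Fin m → ℝ)))
    (hdiff : ∀ x ∈ X, HasFDerivAt g (Jg x) x)
    (hscq : ∀ μ ∈ polarCone K, ∀ x ∈ X, ∀ y ∈ X, ∀ t ∈ Icc (0 : ℝ) 1,
      μ ⬝ᵥ g (x + t • (y - x)) ≤ max (μ ⬝ᵥ g x) (μ ⬝ᵥ g y)) :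
    ∀ x ∈ X, ∀ y ∈ X, -g x ∈ K → -g y ∈ K →
      -(Jg x (y - x)) ∈ polarCone (Mstar K g x) := by
  intro x hx y hy _ hgy μ ⟨hμK, hμgx⟩
  have hgy_le : μ ⬝ᵥ g y ≤ μ ⬝ᵥ g x := by
    simpa [dotProduct_neg, hμgx] using hμK (-g y) hgy
  have hmax : IsMaxOn (fun z => μ ⬝ᵥ g z) (segment ℝ x y) x :=
    isMaxOn_segment_of_le_max (hscq μ hμK x hx y hy) hgy_le
  have hderiv : μ ⬝ᵥ Jg x (y - x) ≤ 0 :=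
    ((hdiff x hx).dotProduct_left μ).apply_sub_nonpos_of_isMaxOn_segment hmax
  show 0 ≤ -(Jg x (y - x)) ⬝ᵥ μ
  rw [neg_dotProduct, dotProduct_comm]
  exact neg_nonneg.mpr hderiv

/-- Let `X ⊆ ℝ^s` be an open convex set, `K ⊆ ℝ^m` a closed convex cone with vertex
at the origin, and `g : X → ℝ^m` Fréchet differentiable (with Jacobian `Jg`) and
scalarly quasiconvex on `X` w.r.t. `K` (i.e. `x ↦ μ ⬝ᵥ g x` is quasiconvex for every
`μ ∈ K*`).  Then for all `x, y ∈ X` with `g x ∈ −K` and `g y ∈ −K` one has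
`Jg x (y − x) ∈ −M**(x)`, where `M**(x)` is the positive polar cone of `M*(x)`. -/
theorem stmt_9 {s m : ℕ} (X : Set (Fin s → ℝ)) (hXopen : IsOpen X) (hXconvex : Convex ℝ X)
    (K : Set (Fin m → ℝ))
    (hK0 : (0 : Fin m → ℝ) ∈ K)
    (hKcone : ∀ t : ℝ, 0 < t → ∀ y ∈ K, t • y ∈ K)
    (hKclosed : IsClosed K) (hKconvex : Convex ℝ K)
    (g : (Fin s → ℝ) → (Fin m → ℝ))
    (Jg : (Fin s → ℝ) → ((Fin s → ℝ) →L[ℝ] (Fin m → ℝ)))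
    (hdiff : ∀ x ∈ X, HasFDerivAt g (Jg x) x)
    (hscq : ∀ μ ∈ polarCone K, ∀ x ∈ X, ∀ y ∈ X, ∀ t ∈ Icc (0 : ℝ) 1,
      μ ⬝ᵥ g (x + t • (y - x)) ≤ max (μ ⬝ᵥ g x) (μ ⬝ᵥ g y)) :
    ∀ x ∈ X, ∀ y ∈ X, -g x ∈ K → -g y ∈ K →
      -(Jg x (y - x)) ∈ polarCone (Mstar K g x) :=
  stmt_9_general X K g Jg hdiff hscq
end

section
/- Consider the problem (P): C-minimize f(x) subject to g(x) ∈ −K, where X ⊆ ℝ^s is open, f : X → ℝ^n and g : X → ℝ^m are Fréchet differentiable, and C ⊆ ℝ^n, K ⊆ ℝ^m are closed convex cones with vertex at the origin and nonempty interior. If the problem (P) is FJ-pseudoconvex and x is a Fritz John stationary point of (P), then x is a weakly efficient global solution of (P). -/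
open Matrix Set

/-- If `l` is nonnegative (as a linear functional via dot product) on `S` and `z` is an
interior point of `S`, with `l ≠ 0`, then `l ⬝ᵥ z > 0`. -/
lemma dot_pos_of_interior {d : ℕ} {S : Set (Fin d → ℝ)} {l z : Fin d → ℝ}
    (hl : l ≠ 0) (hS : ∀ w ∈ S, 0 ≤ l ⬝ᵥ w) (hz : z ∈ interior S) :
    0 < l ⬝ᵥ z := by
  rw [mem_interior_iff_mem_nhds, Metric.mem_nhds_iff] at hz
  obtain ⟨ε, hε, hball⟩ := hz
  have hll : 0 < l ⬝ᵥ l := by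
    rcases (lt_or_eq_of_le (Finset.sum_nonneg (fun i _ => mul_self_nonneg (l i))) : _) with h | h
    · exact h
    · exact absurd ((dotProduct_self_eq_zero).mp h.symm) hl
  have hln : 0 < ‖l‖ := norm_pos_iff.mpr hl
  set t : ℝ := ε / (2 * ‖l‖) with ht
  have htpos : 0 < t := div_pos hε (by positivity)
  have hw : z - t • l ∈ S := by
    apply hball
    rw [Metric.mem_ball, dist_eq_norm]
    have : z - t • l - z = -(t • l) := by ring_nf
    rw [this, norm_neg, norm_smul, Real.norm_eq_abs, abs_of_pos htpos]
    rw [ht, div_mul_eq_mul_div]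
    rw [div_lt_iff₀ (by positivity)]
    nlinarith
  have := hS _ hw
  rw [dotProduct_sub, dotProduct_smul, smul_eq_mul] at this
  nlinarith

/-- Consider the problem (P): C-minimize `f x` subject to `g x ∈ −K`, with `X ⊆ ℝ^s`
open, `f, g` Fréchet differentiable (Jacobians `Jf`, `Jg`), and `C ⊆ ℝ^n`, `K ⊆ ℝ^m`
closed convex cones with vertex at the origin and nonempty interior.  If (P) is
FJ-pseudoconvex (hypothesis `hFJpc`) and `x` is a Fritz John stationary point, then
`x` is a weakly efficient global solution of (P). -/
theorem stmt_10 {s n m : ℕ} (X : Set (Fin s → ℝ)) (hXopen : IsOpen X)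
    (C : Set (Fin n → ℝ))
    (hC0 : (0 : Fin n → ℝ) ∈ C)
    (hCcone : ∀ t : ℝ, 0 < t → ∀ y ∈ C, t • y ∈ C)
    (hCclosed : IsClosed C) (hCconvex : Convex ℝ C) (hCint : (interior C).Nonempty)
    (K : Set (Fin m → ℝ))
    (hK0 : (0 : Fin m → ℝ) ∈ K)
    (hKcone : ∀ t : ℝ, 0 < t → ∀ y ∈ K, t • y ∈ K)
    (hKclosed : IsClosed K) (hKconvex : Convex ℝ K) (hKint : (interior K).Nonempty)
    (f : (Fin s → ℝ) → (Fin n → ℝ))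
    (Jf : (Fin s → ℝ) → ((Fin s → ℝ) →L[ℝ] (Fin n → ℝ)))
    (hfdiff : ∀ x ∈ X, HasFDerivAt f (Jf x) x)
    (g : (Fin s → ℝ) → (Fin m → ℝ))
    (Jg : (Fin s → ℝ) → ((Fin s → ℝ) →L[ℝ] (Fin m → ℝ)))
    (hgdiff : ∀ x ∈ X, HasFDerivAt g (Jg x) x)
    -- (P) is FJ-pseudoconvex:
    (hFJpc : ∀ x ∈ X, ∀ y ∈ X,
      f x - f y ∈ interior C → -g x ∈ K → -g y ∈ K →
        -(Jf x (y - x)) ∈ interior (polarCone (polarCone C)) ∧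
        -(Jg x (y - x)) ∈ interior (polarCone (Mstar K g x)))
    -- `x` is a feasible Fritz John stationary point:
    (x : Fin s → ℝ) (hxX : x ∈ X) (hxfeas : -g x ∈ K)
    (hFJ : ∃ lam ∈ polarCone C, ∃ mu ∈ polarCone K,
      ¬(lam = 0 ∧ mu = 0) ∧ (∀ v : Fin s → ℝ, lam ⬝ᵥ Jf x v + mu ⬝ᵥ Jg x v = 0) ∧
      mu ⬝ᵥ g x = 0) :
    -- `x` is a weakly efficient global solution:
    ∀ y ∈ X, -g y ∈ K → f x - f y ∉ interior C := by
  intro y hyX hyfeas hint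
  obtain ⟨lam, hlam, mu, hmu, hne, heq, hmug⟩ := hFJ
  obtain ⟨h1, h2⟩ := hFJpc x hxX y hyX hint hxfeas hyfeas
  -- lam is nonnegative on C** (by symmetry of dot product)
  have hlam' : ∀ w ∈ polarCone (polarCone C), 0 ≤ lam ⬝ᵥ w := fun w hw => by
    have := hw lam hlam
    rwa [dotProduct_comm] at this
  -- mu ∈ Mstar K g x, so mu is nonnegative on (Mstar K g x)*
  have hmuM : mu ∈ Mstar K g x := ⟨hmu, hmug⟩
  have hmu' : ∀ w ∈ polarCone (Mstar K g x), 0 ≤ mu ⬝ᵥ w := fun w hw => by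
    have := hw mu hmuM
    rwa [dotProduct_comm] at this
  have key : 0 < lam ⬝ᵥ (-(Jf x (y - x))) + mu ⬝ᵥ (-(Jg x (y - x))) := by
    rcases not_and_or.mp hne with h | h
    · have := dot_pos_of_interior h hlam' h1
      have := hmu' _ (interior_subset h2)
      linarith
    · have := dot_pos_of_interior h hmu' h2
      have := hlam' _ (interior_subset h1)
      linarith
  have := heq (y - x)
  rw [dotProduct_neg, dotProduct_neg] at key
  linarith
end

section
/- Consider the problem (P): C-minimize f(x) subject to g(x) ∈ −K, where X ⊆ ℝ^s is open, f : X → ℝ^n and g : X → ℝ^m are Fréchet differentiable, and C ⊆ ℝ^n, K ⊆ ℝ^m are closed convex cones with vertex at the origin whose positive polar cones C* and K* are pointed. Then (P) is FJ-pseudoinvex if and only if every Fritz John stationary point of (P) is a weakly efficient global solution of (P). -/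
/-!
Pseudoinvexity at a feasible pair `(x, y)` with `f x - f y ∈ int C` asks for a direction `η` with
`-Jf x η ∈ int C**` and `-Jg x η ∈ int M*(x)*`, i.e. `λ ⬝ᵥ Jf x η + μ ⬝ᵥ Jg x η < 0` for every
nonzero `(λ, μ) ∈ C* × M*(x)`. By a Gordan-type theorem of the alternative such an `η` exists iff
the only Fritz John multipliers at `x` are `(0, 0)`: since `C* × M*(x)` is a closed pointed convex
cone, the compact convex hull of the image of its unit sphere under `(λ, μ) ↦ Jf xᵀ λ + Jg xᵀ μ`
misses `0` exactly when there are no such multipliers, and a separating functional gives `η`.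
For feasible `x`, `M*(x)` is the polar cone of `K ∪ {g x}`, hence pointed because `K*` is.
-/

open Matrix Set

open Filter Topology

theorem isCompact_convexHull {E : Type*} [AddCommGroup E] [Module ℝ E] [TopologicalSpace E]
    [IsTopologicalAddGroup E] [ContinuousSMul ℝ E] [FiniteDimensional ℝ E] {A : Set E}
    (hA : IsCompact A) : IsCompact (convexHull ℝ A) := by
  let combos : Fin (Module.finrank ℝ E + 2) → Set E := fun k =>
    (fun p : (Fin k → ℝ) × (Fin k → E) => ∑ i, p.1 i • p.2 i) ''
      (stdSimplex ℝ (Fin k) ×ˢ univ.pi fun _ => A)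
  -- Carathéodory: `finrank + 1` points suffice for every convex combination.
  have hcombos : convexHull ℝ A = ⋃ k, combos k := by
    refine Subset.antisymm (fun x hx => ?_) (iUnion_subset fun k => ?_)
    · obtain ⟨ι, _, z, w, hzA, hz, hw0, hw1, rfl⟩ := eq_pos_convex_span_of_mem_convexHull hx
      have hcard : Fintype.card ι < Module.finrank ℝ E + 2 := by
        have := Submodule.finrank_le (vectorSpan ℝ (range z))
        have := hz.card_le_finrank_succ
        omega
      let e := (Fintype.equivFin ι).symm
      refine mem_iUnion.2 ⟨⟨_, hcard⟩, (w ∘ e, z ∘ e),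
        ⟨⟨fun i => (hw0 _).le, by rw [← hw1, ← e.sum_comp]; rfl⟩,
          fun i _ => hzA (mem_range_self _)⟩, e.sum_comp fun i => w i • z i⟩
    · rintro _ ⟨⟨w, z⟩, ⟨⟨hw0, hw1⟩, hz⟩, rfl⟩
      exact (convex_convexHull ℝ A).sum_mem (fun i _ => hw0 i) hw1
        fun i _ => subset_convexHull ℝ A (hz i (mem_univ i))
  rw [hcombos]
  exact isCompact_iUnion fun k =>
    ((isCompact_stdSimplex ℝ _).prod (isCompact_univ_pi fun _ => hA)).image (by fun_prop)

theorem Convex.diff_zero_of_pointed {E : Type*} [AddCommGroup E] [Module ℝ E] {Q : Set E}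
    (hQ : Convex ℝ Q) (hsmul : ∀ t : ℝ, 0 ≤ t → ∀ q ∈ Q, t • q ∈ Q)
    (hpointed : ∀ q ∈ Q, -q ∈ Q → q = 0) : Convex ℝ (Q \ {0}) := by
  rintro a ⟨ha, ha0⟩ b ⟨hb, hb0⟩ ta tb hta htb hab
  refine ⟨hQ ha hb hta htb hab, fun (hsum : ta • a + tb • b = 0) => ?_⟩
  have hsa : ta • a = 0 :=
    hpointed _ (hsmul ta hta a ha) (neg_eq_of_add_eq_zero_right hsum ▸ hsmul tb htb b hb)
  have hsb : tb • b = 0 :=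
    hpointed _ (hsmul tb htb b hb) (neg_eq_of_add_eq_zero_left hsum ▸ hsmul ta hta a ha)
  have hta0 : ta = 0 := (smul_eq_zero.1 hsa).resolve_right ha0
  have htb0 : tb = 0 := (smul_eq_zero.1 hsb).resolve_right hb0
  simp [hta0, htb0] at hab

theorem exists_pos_comp_of_pointed_cone {E F : Type*} [NormedAddCommGroup E] [NormedSpace ℝ E]
    [FiniteDimensional ℝ E] [NormedAddCommGroup F] [NormedSpace ℝ F] [FiniteDimensional ℝ F]
    {Q : Set E} (hQc : IsClosed Q) (hQconv : Convex ℝ Q)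
    (hsmul : ∀ t : ℝ, 0 ≤ t → ∀ q ∈ Q, t • q ∈ Q) (hpointed : ∀ q ∈ Q, -q ∈ Q → q = 0)
    (L : E →ₗ[ℝ] F) (hL : ∀ q ∈ Q, L q = 0 → q = 0) :
    ∃ φ : F →L[ℝ] ℝ, ∀ q ∈ Q, q ≠ 0 → 0 < φ (L q) := by
  set S := Q ∩ Metric.sphere 0 1
  have hS : IsCompact S := (isCompact_sphere 0 1).inter_left hQc
  have hSQ : convexHull ℝ S ⊆ Q \ {0} :=
    convexHull_min (fun q hq => ⟨hq.1, by rintro rfl; simpa using hq.2⟩)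
      (hQconv.diff_zero_of_pointed hsmul hpointed)
  have hD : IsCompact (convexHull ℝ (L '' S)) :=
    isCompact_convexHull (hS.image L.continuous_of_finiteDimensional)
  have h0 : (0 : F) ∉ convexHull ℝ (L '' S) := by
    rw [← L.image_convexHull]
    rintro ⟨q, hq, hLq⟩
    exact (hSQ hq).2 (hL q (hSQ hq).1 hLq)
  obtain ⟨φ, u, hu, hφ⟩ :=
    geometric_hahn_banach_point_closed (convex_convexHull ℝ _) hD.isClosed h0
  refine ⟨φ, fun q hq hq0 => ?_⟩
  have hqS : ‖q‖⁻¹ • q ∈ S := ⟨hsmul _ (by positivity) q hq, by simp [norm_smul, hq0]⟩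
  have hφq := hφ _ (subset_convexHull ℝ _ (mem_image_of_mem L hqS))
  rw [map_smul, map_smul, smul_eq_mul] at hφq
  rw [map_zero] at hu
  exact pos_of_mul_pos_right (hu.trans hφq) (inv_nonneg.2 (norm_nonneg q))

section PolarCone

variable {d : ℕ}

theorem polarCone_anti : Antitone (polarCone (d := d)) :=
  fun _ _ hAB _ hl x hx => hl x (hAB hx)

theorem isClosed_polarCone (A : Set (Fin d → ℝ)) : IsClosed (polarCone A) := by
  simp only [polarCone, ofPred_forall]
  exact isClosed_biInter fun x _ =>
    isClosed_le continuous_const (continuous_id.dotProduct continuous_const)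

theorem convex_polarCone (A : Set (Fin d → ℝ)) : Convex ℝ (polarCone A) := by
  intro a ha b hb ta tb hta htb _ x hx
  rw [add_dotProduct, smul_dotProduct, smul_dotProduct]
  exact add_nonneg (smul_nonneg hta (ha x hx)) (smul_nonneg htb (hb x hx))

theorem smul_mem_polarCone {A : Set (Fin d → ℝ)} {t : ℝ} (ht : 0 ≤ t) {l : Fin d → ℝ}
    (hl : l ∈ polarCone A) : t • l ∈ polarCone A := fun x hx => by
  rw [smul_dotProduct]
  exact smul_nonneg ht (hl x hx)

theorem zero_mem_polarCone (A : Set (Fin d → ℝ)) : (0 : Fin d → ℝ) ∈ polarCone A :=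
  fun x _ => by rw [zero_dotProduct]

theorem dotProduct_pos_of_mem_interior_polarCone {P : Set (Fin d → ℝ)} {z : Fin d → ℝ}
    (hz : z ∈ interior (polarCone P)) {l : Fin d → ℝ} (hl : l ∈ P) (hl0 : l ≠ 0) :
    0 < z ⬝ᵥ l := by
  have hlim : Tendsto (fun t : ℝ => z - t • l) (𝓝[>] 0) (𝓝 z) := by
    have hcont : Continuous fun t : ℝ => z - t • l := by fun_prop
    exact tendsto_nhdsWithin_of_tendsto_nhds (hcont.tendsto' 0 z (by simp))
  obtain ⟨t, hzt, ht⟩ :=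
    ((hlim.eventually (mem_interior_iff_mem_nhds.1 hz)).and self_mem_nhdsWithin).exists
  have hll : 0 < l ⬝ᵥ l := by simpa using dotProduct_self_star_pos_iff.2 hl0
  have := hzt l hl
  rw [sub_dotProduct, smul_dotProduct, smul_eq_mul] at this
  nlinarith [show (0:ℝ) < t from ht]

theorem mem_interior_polarCone_of_dotProduct_pos {P : Set (Fin d → ℝ)} (hP : IsClosed P)
    (hsmul : ∀ t : ℝ, 0 ≤ t → ∀ l ∈ P, t • l ∈ P) {z : Fin d → ℝ}
    (hz : ∀ l ∈ P, l ≠ 0 → 0 < z ⬝ᵥ l) : z ∈ interior (polarCone P) := by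
  set S := P ∩ Metric.sphere 0 1
  have hS : IsCompact S := (isCompact_sphere 0 1).inter_left hP
  -- positivity on the compact slice `S` persists near `z`
  have hnear : ∀ᶠ z' in 𝓝 z, ∀ l ∈ S, 0 < z' ⬝ᵥ l :=
    hS.eventually_forall_of_forall_eventually fun l hl =>
      (isOpen_lt continuous_const (continuous_fst.dotProduct continuous_snd)).mem_nhds
        (hz l hl.1 (by rintro rfl; simpa using hl.2))
  refine mem_interior_iff_mem_nhds.2 (mem_of_superset hnear fun z' hz' x hx => ?_)
  rcases eq_or_ne x 0 with rfl | hx0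
  · rw [dotProduct_zero]
  have hxS : ‖x‖⁻¹ • x ∈ S := ⟨hsmul _ (by positivity) x hx, by simp [norm_smul, hx0]⟩
  have := hz' _ hxS
  rw [dotProduct_smul, smul_eq_mul] at this
  exact (pos_of_mul_pos_right this (inv_nonneg.2 (norm_nonneg x))).le

end PolarCone

theorem Mstar_eq_polarCone_insert {s m : ℕ} {K : Set (Fin m → ℝ)}
    {g : (Fin s → ℝ) → (Fin m → ℝ)} {x : Fin s → ℝ} (hgx : -g x ∈ K) :
    Mstar K g x = polarCone (insert (g x) K) := by
  ext μ
  simp only [Mstar, polarCone, mem_ofPred_eq, forall_mem_insert]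
  refine ⟨fun ⟨hμ, hμg⟩ => ⟨hμg.ge, hμ⟩, fun ⟨hμg, hμ⟩ => ⟨hμ, le_antisymm ?_ hμg⟩⟩
  simpa [dotProduct_neg] using hμ _ hgx

section Alternative

variable {s n m : ℕ} {F : (Fin s → ℝ) →L[ℝ] (Fin n → ℝ)} {G : (Fin s → ℝ) →L[ℝ] (Fin m → ℝ)}

theorem multipliers_eq_zero_of_strict_descent {P : Set (Fin n → ℝ)} {M : Set (Fin m → ℝ)}
    {η : Fin s → ℝ} (hF : -(F η) ∈ interior (polarCone P)) (hG : -(G η) ∈ interior (polarCone M))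
    {lam : Fin n → ℝ} {mu : Fin m → ℝ} (hlam : lam ∈ P) (hmu : mu ∈ M)
    (hstat : ∀ v, lam ⬝ᵥ F v + mu ⬝ᵥ G v = 0) : lam = 0 ∧ mu = 0 := by
  have hsum : -(F η) ⬝ᵥ lam + -(G η) ⬝ᵥ mu = 0 := by
    simp only [neg_dotProduct, dotProduct_comm (F η), dotProduct_comm (G η)]
    linarith [hstat η]
  have hF0 := interior_subset hF lam hlam
  have hG0 := interior_subset hG mu hmu
  refine ⟨by_contra fun h => ?_, by_contra fun h => ?_⟩
  · linarith [dotProduct_pos_of_mem_interior_polarCone hF hlam h]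
  · linarith [dotProduct_pos_of_mem_interior_polarCone hG hmu h]

theorem exists_strict_descent_of_multipliers_eq_zero {A : Set (Fin n → ℝ)} {B : Set (Fin m → ℝ)}
    (hA : ∀ l ∈ polarCone A, -l ∈ polarCone A → l = 0)
    (hB : ∀ l ∈ polarCone B, -l ∈ polarCone B → l = 0)
    (h : ∀ lam ∈ polarCone A, ∀ mu ∈ polarCone B,
      (∀ v, lam ⬝ᵥ F v + mu ⬝ᵥ G v = 0) → lam = 0 ∧ mu = 0) :
    ∃ η, -(F η) ∈ interior (polarCone (polarCone A)) ∧
      -(G η) ∈ interior (polarCone (polarCone B)) := by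
  -- `L (lam, mu) = Fᵀ lam + Gᵀ mu`
  let L : (Fin n → ℝ) × (Fin m → ℝ) →ₗ[ℝ] (Fin s → ℝ) :=
    (LinearMap.toMatrix' (F : (Fin s → ℝ) →ₗ[ℝ] (Fin n → ℝ))).vecMulLinear.coprod
      (LinearMap.toMatrix' (G : (Fin s → ℝ) →ₗ[ℝ] (Fin m → ℝ))).vecMulLinear
  have hL : ∀ q v, L q ⬝ᵥ v = q.1 ⬝ᵥ F v + q.2 ⬝ᵥ G v := fun q v => by
    simp [L, add_dotProduct, ← dotProduct_mulVec]
  obtain ⟨φ, hφ⟩ := exists_pos_comp_of_pointed_cone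
    ((isClosed_polarCone A).prod (isClosed_polarCone B))
    ((convex_polarCone A).prod (convex_polarCone B))
    (fun t ht q hq => ⟨smul_mem_polarCone ht hq.1, smul_mem_polarCone ht hq.2⟩)
    (fun q hq hnq => Prod.ext (hA _ hq.1 hnq.1) (hB _ hq.2 hnq.2)) L
    fun q hq hLq => Prod.ext_iff.2 <|
      h q.1 hq.1 q.2 hq.2 fun v => by rw [← hL, hLq, zero_dotProduct]
  let w := (dotProductEquiv ℝ (Fin s)).symm φ.toLinearMap
  have hw : ∀ y, φ y = w ⬝ᵥ y := fun y =>
    (LinearMap.congr_fun ((dotProductEquiv ℝ (Fin s)).apply_symm_apply φ.toLinearMap) y).symm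
  refine ⟨-w, mem_interior_polarCone_of_dotProduct_pos (isClosed_polarCone A)
      (fun t ht l hl => smul_mem_polarCone ht hl) fun l hl hl0 => ?_,
    mem_interior_polarCone_of_dotProduct_pos (isClosed_polarCone B)
      (fun t ht l hl => smul_mem_polarCone ht hl) fun l hl hl0 => ?_⟩
  · have := hφ (l, 0) ⟨hl, zero_mem_polarCone B⟩ (by simpa using hl0)
    rw [hw, dotProduct_comm, hL] at this
    simpa [dotProduct_comm] using this
  · have := hφ (0, l) ⟨zero_mem_polarCone A, hl⟩ (by simpa using hl0)
    rw [hw, dotProduct_comm, hL] at this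
    simpa [dotProduct_comm] using this

end Alternative

theorem stmt_13_general {s n m : ℕ} (X : Set (Fin s → ℝ))
    (C : Set (Fin n → ℝ))
    (K : Set (Fin m → ℝ))
    -- `C*` and `K*` are pointed:
    (hCpolarPointed : ∀ l, l ∈ polarCone C → -l ∈ polarCone C → l = 0)
    (hKpolarPointed : ∀ l, l ∈ polarCone K → -l ∈ polarCone K → l = 0)
    (f : (Fin s → ℝ) → (Fin n → ℝ))
    (Jf : (Fin s → ℝ) → ((Fin s → ℝ) →L[ℝ] (Fin n → ℝ)))
    (g : (Fin s → ℝ) → (Fin m → ℝ))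
    (Jg : (Fin s → ℝ) → ((Fin s → ℝ) →L[ℝ] (Fin m → ℝ))) :
    -- (P) is FJ-pseudoinvex ↔ every Fritz John stationary point is weakly efficient:
    (∀ x ∈ X, ∀ y ∈ X, ∃ η : Fin s → ℝ,
      f x - f y ∈ interior C → -g x ∈ K → -g y ∈ K →
        -(Jf x η) ∈ interior (polarCone (polarCone C)) ∧
        -(Jg x η) ∈ interior (polarCone (Mstar K g x))) ↔
    (∀ x ∈ X, -g x ∈ K →
      (∃ lam ∈ polarCone C, ∃ mu ∈ polarCone K,
        ¬(lam = 0 ∧ mu = 0) ∧ (∀ v : Fin s → ℝ, lam ⬝ᵥ Jf x v + mu ⬝ᵥ Jg x v = 0) ∧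
        mu ⬝ᵥ g x = 0) →
      ∀ y ∈ X, -g y ∈ K → f x - f y ∉ interior C) := by
  constructor
  · rintro hPI x hx hgx ⟨lam, hlam, mu, hmu, hne, hstat, hcomp⟩ y hy hgy hfxy
    obtain ⟨η, hη⟩ := hPI x hx y hy
    obtain ⟨hF, hG⟩ := hη hfxy hgx hgy
    exact hne (multipliers_eq_zero_of_strict_descent hF hG hlam ⟨hmu, hcomp⟩ hstat)
  · intro hWE x hx y hy
    by_cases hfeas : f x - f y ∈ interior C ∧ -g x ∈ K ∧ -g y ∈ K
    · obtain ⟨hfxy, hgx, hgy⟩ := hfeas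
      have hM := Mstar_eq_polarCone_insert hgx
      have hMK : polarCone (insert (g x) K) ⊆ polarCone K := polarCone_anti (subset_insert _ _)
      obtain ⟨η, hη⟩ := exists_strict_descent_of_multipliers_eq_zero (F := Jf x) (G := Jg x)
        hCpolarPointed (fun l hl hnl => hKpolarPointed l (hMK hl) (hMK hnl))
        fun lam hlam mu hmu hstat => by_contra fun hne =>
          hWE x hx hgx ⟨lam, hlam, mu, hMK hmu, hne, hstat, (hM ▸ hmu).2⟩ y hy hgy hfxy
      exact ⟨η, fun _ _ _ => hM ▸ hη⟩
    · exact ⟨0, fun h1 h2 h3 => absurd ⟨h1, h2, h3⟩ hfeas⟩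

/-- Consider the problem (P): C-minimize `f x` subject to `g x ∈ −K`, with `X ⊆ ℝ^s`
open, `f, g` Fréchet differentiable (Jacobians `Jf`, `Jg`), and `C ⊆ ℝ^n`, `K ⊆ ℝ^m`
closed convex cones with vertex at the origin whose positive polar cones `C*`, `K*`
are pointed.  Then (P) is FJ-pseudoinvex iff every Fritz John stationary point of
(P) is a weakly efficient global solution of (P). -/
theorem stmt_13 {s n m : ℕ} (X : Set (Fin s → ℝ)) (hXopen : IsOpen X)
    (C : Set (Fin n → ℝ))
    (hC0 : (0 : Fin n → ℝ) ∈ C)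
    (hCcone : ∀ t : ℝ, 0 < t → ∀ y ∈ C, t • y ∈ C)
    (hCclosed : IsClosed C) (hCconvex : Convex ℝ C)
    (K : Set (Fin m → ℝ))
    (hK0 : (0 : Fin m → ℝ) ∈ K)
    (hKcone : ∀ t : ℝ, 0 < t → ∀ y ∈ K, t • y ∈ K)
    (hKclosed : IsClosed K) (hKconvex : Convex ℝ K)
    -- `C*` and `K*` are pointed:
    (hCpolarPointed : ∀ l, l ∈ polarCone C → -l ∈ polarCone C → l = 0)
    (hKpolarPointed : ∀ l, l ∈ polarCone K → -l ∈ polarCone K → l = 0)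
    (f : (Fin s → ℝ) → (Fin n → ℝ))
    (Jf : (Fin s → ℝ) → ((Fin s → ℝ) →L[ℝ] (Fin n → ℝ)))
    (hfdiff : ∀ x ∈ X, HasFDerivAt f (Jf x) x)
    (g : (Fin s → ℝ) → (Fin m → ℝ))
    (Jg : (Fin s → ℝ) → ((Fin s → ℝ) →L[ℝ] (Fin m → ℝ)))
    (hgdiff : ∀ x ∈ X, HasFDerivAt g (Jg x) x) :
    -- (P) is FJ-pseudoinvex ↔ every Fritz John stationary point is weakly efficient:
    (∀ x ∈ X, ∀ y ∈ X, ∃ η : Fin s → ℝ,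
      f x - f y ∈ interior C → -g x ∈ K → -g y ∈ K →
        -(Jf x η) ∈ interior (polarCone (polarCone C)) ∧
        -(Jg x η) ∈ interior (polarCone (Mstar K g x))) ↔
    (∀ x ∈ X, -g x ∈ K →
      (∃ lam ∈ polarCone C, ∃ mu ∈ polarCone K,
        ¬(lam = 0 ∧ mu = 0) ∧ (∀ v : Fin s → ℝ, lam ⬝ᵥ Jf x v + mu ⬝ᵥ Jg x v = 0) ∧
        mu ⬝ᵥ g x = 0) →
      ∀ y ∈ X, -g y ∈ K → f x - f y ∉ interior C) :=
  stmt_13_general X C K hCpolarPointed hKpolarPointed f Jf g Jg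
end
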